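/- arXiv:1209.5198 — 3 statements merged into one kernel-verified Lean document; each statement's English description precedes it below -/
import Mathlib

section
/- Let r, b, p, q be natural numbers, let B be an r×b matrix of full row rank r (i.e. rank B = r), C an r×q matrix, D a p×b matrix, and E a p×q matrix over 𝔽₂, and suppose there exists a p×r matrix Y over 𝔽₂ with D = Y·B. Then rank [[B, C],[D, E]] = r + rank(E + Y·C). -/
/-!
Left multiplication by the unipotent matrix `[[1, 0], [-Y, 1]]` turns `[[B, C], [Y B, E]]` into
`[[B, C], [0, E - Y C]]`. Since `B` has full row rank it has a right inverse `B'`, and right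
multiplication by `[[1, -B' C], [0, 1]]` clears `C`. Neither step changes the rank, and the rank
of a block-diagonal matrix is the sum of the ranks of its blocks. Over `𝔽₂`, `E - Y C = E + Y C`.
-/

open Module

theorem Submodule.finrank_prod {K M N : Type*} [DivisionRing K] [AddCommGroup M] [Module K M]
    [AddCommGroup N] [Module K N] (p : Submodule K M) (q : Submodule K N)
    [FiniteDimensional K p] [FiniteDimensional K q] :
    finrank K (p.prod q) = finrank K p + finrank K q := by
  have e := LinearEquiv.ofInjective (p.subtype.prodMap q.subtype)
    (p.injective_subtype.prodMap q.injective_subtype)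
  rw [LinearMap.range_prodMap, p.range_subtype, q.range_subtype] at e
  rw [← e.finrank_eq, Module.finrank_prod]

namespace Matrix

variable {R K : Type*} [CommRing R] [Field K] {m n m' n' : Type*}
  [Fintype m] [Fintype n] [Fintype m'] [Fintype n']

theorem toLin_fromBlocks_zero_zero {M₁ M₂ N₁ N₂ : Type*} [AddCommGroup M₁] [Module K M₁]
    [AddCommGroup M₂] [Module K M₂] [AddCommGroup N₁] [Module K N₁] [AddCommGroup N₂]
    [Module K N₂] [DecidableEq n] [DecidableEq n']
    (v₁ : Basis n K M₁) (v₂ : Basis n' K M₂) (w₁ : Basis m K N₁) (w₂ : Basis m' K N₂)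
    (A : Matrix m n K) (D : Matrix m' n' K) :
    toLin (v₁.prod v₂) (w₁.prod w₂) (fromBlocks A 0 0 D) =
      (toLin v₁ w₁ A).prodMap (toLin v₂ w₂ D) := by
  classical
  apply (LinearMap.toMatrix (v₁.prod v₂) (w₁.prod w₂)).injective
  rw [LinearMap.toMatrix_toLin]
  ext (i | i) (j | j) <;> simp [LinearMap.toMatrix_apply, Finsupp.single_apply]

theorem rank_fromBlocks_zero_zero (A : Matrix m n K) (D : Matrix m' n' K) :
    (fromBlocks A 0 0 D).rank = A.rank + D.rank := by
  classical
  rw [rank_eq_finrank_range_toLin _ ((Pi.basisFun K m).prod (Pi.basisFun K m'))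
      ((Pi.basisFun K n).prod (Pi.basisFun K n')), toLin_fromBlocks_zero_zero,
    LinearMap.range_prodMap, Submodule.finrank_prod, ← rank_eq_finrank_range_toLin,
    ← rank_eq_finrank_range_toLin]

theorem exists_mul_eq_one_of_rank_eq_card [DecidableEq m] {B : Matrix m n K}
    (hB : B.rank = Fintype.card m) : ∃ B' : Matrix n m K, B * B' = 1 := by
  rw [← mulVec_surjective_iff_exists_right_inverse]
  refine (LinearMap.range_eq_top (f := B.mulVecLin)).mp (Submodule.eq_top_of_finrank_eq ?_)
  rwa [finrank_fintype_fun_eq_card]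

theorem rank_fromBlocks_mul_left_eq (B : Matrix m n R) (C : Matrix m n' R) (Y : Matrix m' m R)
    (E : Matrix m' n' R) :
    (fromBlocks B C (Y * B) E).rank = (fromBlocks B C 0 (E - Y * C)).rank := by
  classical
  have hmul : (fromBlocks 1 0 (-Y) 1 : Matrix (m ⊕ m') (m ⊕ m') R) * fromBlocks B C (Y * B) E =
      fromBlocks B C 0 (E - Y * C) := by
    simp [fromBlocks_multiply, sub_eq_neg_add]
  have hdet : IsUnit (fromBlocks (1 : Matrix m m R) 0 (-Y) 1).det := by simp
  rw [← hmul, rank_mul_eq_right_of_isUnit_det _ _ hdet]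

theorem rank_fromBlocks_zero₂₁_of_mul_eq_one [DecidableEq m] {B : Matrix m n K}
    {B' : Matrix n m K} (hB : B * B' = 1) (C : Matrix m n' K) (F : Matrix m' n' K) :
    (fromBlocks B C 0 F).rank = B.rank + F.rank := by
  classical
  have hmul : fromBlocks B C 0 F * (fromBlocks 1 (-(B' * C)) 0 1 : Matrix (n ⊕ n') (n ⊕ n') K) =
      fromBlocks B 0 0 F := by
    simp [fromBlocks_multiply, ← Matrix.mul_assoc, hB]
  have hdet : IsUnit (fromBlocks (1 : Matrix n n K) (-(B' * C)) 0 1).det := by simp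
  rw [← rank_mul_eq_left_of_isUnit_det _ _ hdet, hmul, rank_fromBlocks_zero_zero]

theorem rank_fromBlocks_eq_card_add_rank_schur {B : Matrix m n K}
    (hB : B.rank = Fintype.card m) (C : Matrix m n' K) (Y : Matrix m' m K) (E : Matrix m' n' K) :
    (fromBlocks B C (Y * B) E).rank = Fintype.card m + (E - Y * C).rank := by
  classical
  obtain ⟨B', hB'⟩ := exists_mul_eq_one_of_rank_eq_card hB
  rw [rank_fromBlocks_mul_left_eq, rank_fromBlocks_zero₂₁_of_mul_eq_one hB', hB]

end Matrix

theorem stmt_1 (r b p q : ℕ)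
    (B : Matrix (Fin r) (Fin b) (ZMod 2)) (C : Matrix (Fin r) (Fin q) (ZMod 2))
    (D : Matrix (Fin p) (Fin b) (ZMod 2)) (E : Matrix (Fin p) (Fin q) (ZMod 2))
    (hB : B.rank = r)
    (Y : Matrix (Fin p) (Fin r) (ZMod 2)) (hY : D = Y * B) :
    (Matrix.fromBlocks B C D E).rank = r + (E + Y * C).rank := by
  have hsub : E + Y * C = E - Y * C := by
    ext i j
    exact (CharTwo.sub_eq_add _ _).symm
  rw [hY, hsub, Matrix.rank_fromBlocks_eq_card_add_rank_schur (by rw [hB, Fintype.card_fin]),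
    Fintype.card_fin]
end

section
/- Let F be a field, B an r×b matrix over F, J a b×r matrix over F with Jᵀ·J = I_r, and R a b×b matrix over F with Jᵀ·R = 0. Suppose the b×b matrix J·B + R is invertible, and define Z = (J·B + R)⁻¹·J (a b×r matrix). Then B·Z = I_r; moreover, for any p×b matrix D satisfying D = Y·B for some p×r matrix Y, one has D·Z = Y. In particular Z is a pseudo-inverse of B. -/
theorem stmt_4 (F : Type*) [Field F] (r b : ℕ)
    (B : Matrix (Fin r) (Fin b) F)
    (J : Matrix (Fin b) (Fin r) F) (hJ : J.transpose * J = 1)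
    (R : Matrix (Fin b) (Fin b) F) (hR : J.transpose * R = 0)
    (h : IsUnit (J * B + R)) :
    B * ((J * B + R)⁻¹ * J) = 1 ∧
    ∀ (p : ℕ) (D : Matrix (Fin p) (Fin b) F) (Y : Matrix (Fin p) (Fin r) F),
      D = Y * B → D * ((J * B + R)⁻¹ * J) = Y := by
  have hdet : IsUnit (J * B + R).det := (Matrix.isUnit_iff_isUnit_det _).mp h
  have key : B * ((J * B + R)⁻¹ * J) = 1 := by
    have hB : B = J.transpose * (J * B + R) := by
      rw [Matrix.mul_add, hR, add_zero, ← Matrix.mul_assoc, hJ, Matrix.one_mul]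
    set M := J * B + R with hM
    rw [hB, Matrix.mul_assoc, ← Matrix.mul_assoc M,
      Matrix.mul_nonsing_inv _ hdet, Matrix.one_mul, hJ]
  exact ⟨key, fun p D Y hD => by rw [hD, Matrix.mul_assoc, key, Matrix.mul_one]⟩
end

section
/- Let n, b, c be positive real numbers and define M(x) = (x²·(2^c − 1) + x³)/(b·c) for x > 0. Then 11·n²/(2·b) + 7·M(n/2) ≤ M(n) if and only if n ≥ 44·c + 6·(2^c − 1). -/
theorem stmt_12 (n b c : ℝ) (hn : 0 < n) (hb : 0 < b) (hc : 0 < c) :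
    11 * n ^ 2 / (2 * b) +
        7 * (((n / 2) ^ 2 * ((2 : ℝ) ^ c - 1) + (n / 2) ^ 3) / (b * c)) ≤
      (n ^ 2 * ((2 : ℝ) ^ c - 1) + n ^ 3) / (b * c) ↔
    44 * c + 6 * ((2 : ℝ) ^ c - 1) ≤ n := by
  have key : (n ^ 2 * ((2 : ℝ) ^ c - 1) + n ^ 3) / (b * c) -
      (11 * n ^ 2 / (2 * b) +
        7 * (((n / 2) ^ 2 * ((2 : ℝ) ^ c - 1) + (n / 2) ^ 3) / (b * c))) =
      n ^ 2 * (n - (44 * c + 6 * ((2 : ℝ) ^ c - 1))) / (8 * (b * c)) := by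
    field_simp
    ring
  have h8 : (0 : ℝ) < 8 * (b * c) := by positivity
  rw [← sub_nonneg, key, le_div_iff₀ h8, zero_mul,
    mul_nonneg_iff_of_pos_left (pow_pos hn 2), sub_nonneg]
end
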